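/- arXiv:1707.09854 — 9 statements merged into one kernel-verified Lean document; each statement's English description precedes it below -/
import Mathlib

section
/- Let R_n = ℤ[x₁^{±1},…,x_n^{±1}] be the Laurent polynomial ring in n variables and σ_i = x_i - 1. If A is an n×n matrix over R_n satisfying A·σ⃗ = 0⃗, where σ⃗ is the column vector with entries σ_i, then for every pair of indices k, l, the entry a_{k,l} lies in the ideal generated by {σ_i : i ≠ l}; in particular each entry lies in the augmentation ideal 𝔄 = Σ_{i=1}^n σ_i R_n. -/
/-- The Laurent polynomial ring `R_n = ℤ[x₁^{±1},…,x_n^{±1}] = ℤ[ℤⁿ]`. -/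
abbrev Rn (n : ℕ) := AddMonoidAlgebra ℤ (Fin n →₀ ℤ)

/-- The variable `x_i` of `R_n`. -/
noncomputable def Xv {n : ℕ} (i : Fin n) : Rn n :=
  AddMonoidAlgebra.single (Finsupp.single i 1) 1

/-- `σ_i = x_i - 1`. -/
noncomputable def sg {n : ℕ} (i : Fin n) : Rn n := Xv i - 1

/-!
Setting `x_i = 1` for all `i ≠ l` is a ring map `R_n → ℤ[x_l^{±1}]` whose kernel is exactly the
ideal `I_l` generated by the `σ_i` with `i ≠ l`: modulo `I_l` every monomial `x^m` is congruent
to `x_l^{m_l}`. Row `k` of `A·σ⃗ = 0` puts `a_{k,l} σ_l` in `I_l`, and `σ_l` maps to `x_l - 1 ≠ 0`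
in the domain `ℤ[x_l^{±1}]`, so `a_{k,l} ∈ I_l ⊆ 𝔄`.
-/

lemma Ideal.mul_mem_span_of_sum_mul_eq_zero {R ι : Type*} [CommRing R] [Fintype ι]
    {a s : ι → R} (h : ∑ i, a i * s i = 0) (l : ι) :
    a l * s l ∈ Ideal.span {r : R | ∃ i, i ≠ l ∧ r = s i} := by
  classical
  rw [Fintype.sum_eq_add_sum_compl l, add_eq_zero_iff_eq_neg] at h
  rw [h]
  refine neg_mem (Ideal.sum_mem _ fun i hi => Ideal.mul_mem_left _ _ (Ideal.subset_span ?_))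
  exact ⟨i, Finset.mem_compl.mp hi ∘ Finset.mem_singleton.mpr, rfl⟩

namespace Rn

variable {n : ℕ}

/-- Specialisation `x_i ↦ 1` for `i ≠ l`, onto `ℤ[x_l^{±1}]`. -/
noncomputable def toVar (l : Fin n) : Rn n →+* AddMonoidAlgebra ℤ ℤ :=
  AddMonoidAlgebra.mapDomainRingHom ℤ (Finsupp.applyAddHom l)

noncomputable def ofVar (l : Fin n) : AddMonoidAlgebra ℤ ℤ →+* Rn n :=
  AddMonoidAlgebra.mapDomainRingHom ℤ (Finsupp.singleAddHom l)

noncomputable def sgIdealExcept (l : Fin n) : Ideal (Rn n) :=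
  Ideal.span {r : Rn n | ∃ i : Fin n, i ≠ l ∧ r = sg i}

lemma sg_mem_sgIdealExcept {i l : Fin n} (h : i ≠ l) : sg i ∈ sgIdealExcept l :=
  Ideal.subset_span ⟨i, h, rfl⟩

lemma toVar_single (l : Fin n) (m : Fin n →₀ ℤ) (c : ℤ) :
    toVar l (AddMonoidAlgebra.single m c) = AddMonoidAlgebra.single (m l) c :=
  AddMonoidAlgebra.mapDomain_single

lemma ofVar_single (l : Fin n) (z c : ℤ) :
    ofVar l (AddMonoidAlgebra.single z c) = AddMonoidAlgebra.single (Finsupp.single l z) c :=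
  AddMonoidAlgebra.mapDomain_single

lemma toVar_sg (l i : Fin n) :
    toVar l (sg i) = AddMonoidAlgebra.single (Finsupp.single i 1 l) 1 - 1 := by
  rw [sg, Xv, map_sub, map_one, toVar_single]

lemma toVar_sg_self_ne_zero (l : Fin n) : toVar l (sg l) ≠ 0 := by
  rw [toVar_sg, Finsupp.single_eq_same, sub_ne_zero, AddMonoidAlgebra.one_def, Ne,
    AddMonoidAlgebra.single_left_inj one_ne_zero]
  exact one_ne_zero

lemma mk_comp_ofVar_comp_toVar (l : Fin n) :
    (Ideal.Quotient.mk (sgIdealExcept l)).comp ((ofVar l).comp (toVar l)) =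
      Ideal.Quotient.mk (sgIdealExcept l) := by
  refine AddMonoidAlgebra.ringHom_ext' (RingHom.ext_int _ _) ?_
  ext j
  simp only [MonoidHom.coe_comp, MonoidHom.coe_coe, RingHom.coe_comp,
    AddMonoidHom.coe_toMultiplicative, Function.comp_apply, toAdd_ofAdd,
    Finsupp.singleAddHom_apply, AddMonoidAlgebra.of_apply, toVar_single, ofVar_single]
  rcases eq_or_ne j l with rfl | hj
  · rw [Finsupp.single_eq_same]
  · rw [Finsupp.single_eq_of_ne' hj, Finsupp.single_zero, ← AddMonoidAlgebra.one_def]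
    exact (Ideal.Quotient.eq.mpr (sg_mem_sgIdealExcept hj)).symm

lemma ker_toVar (l : Fin n) : RingHom.ker (toVar l) = sgIdealExcept l := by
  refine le_antisymm (fun a ha => ?_) (Ideal.span_le.mpr ?_)
  · rw [← Ideal.Quotient.eq_zero_iff_mem, ← mk_comp_ofVar_comp_toVar l]
    simp only [RingHom.comp_apply, RingHom.mem_ker.mp ha, map_zero]
  · rintro r ⟨i, hi, rfl⟩
    rw [SetLike.mem_coe, RingHom.mem_ker, toVar_sg, Finsupp.single_eq_of_ne' hi,
      ← AddMonoidAlgebra.one_def, sub_self]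

lemma mem_sgIdealExcept_of_mul_sg_mem {l : Fin n} {a : Rn n}
    (h : a * sg l ∈ sgIdealExcept l) : a ∈ sgIdealExcept l := by
  rw [← ker_toVar, RingHom.mem_ker, map_mul] at h
  rw [← ker_toVar, RingHom.mem_ker]
  exact (mul_eq_zero.mp h).resolve_right (toVar_sg_self_ne_zero l)

end Rn

/-- If `A` is an `n×n` matrix over `R_n` with `A·σ⃗ = 0⃗`, then every entry `a_{k,l}`
lies in the ideal generated by the `σ_i` with `i ≠ l`; in particular it lies in the
augmentation ideal `𝔄 = Σᵢ σ_i R_n`. -/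
theorem entries_in_augmentation_ideal (n : ℕ) (A : Matrix (Fin n) (Fin n) (Rn n))
    (hA : ∀ k : Fin n, ∑ i : Fin n, A k i * sg i = 0) (k l : Fin n) :
    A k l ∈ Ideal.span {r : Rn n | ∃ i : Fin n, i ≠ l ∧ r = sg i} ∧
      A k l ∈ Ideal.span (Set.range (sg (n := n))) := by
  have hmem : A k l ∈ Rn.sgIdealExcept l :=
    Rn.mem_sgIdealExcept_of_mul_sg_mem (Ideal.mul_mem_span_of_sum_mul_eq_zero (hA k) l)
  exact ⟨hmem, Ideal.span_mono (by rintro r ⟨i, -, rfl⟩; exact ⟨i, rfl⟩) hmem⟩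
end

section
/- Let R be a commutative ring, H ◁ R an ideal, and d ≥ 3. Then E_d(R,H) is generated by the matrices (I_d − fE_{i,j})(I_d + hE_{j,i})(I_d + fE_{i,j}) for h ∈ H, f ∈ R, and 1 ≤ i ≠ j ≤ d. -/
open Matrix

/-- `E_d(R)`: the subgroup of `SL_d(R)` generated by the elementary matrices
`I_d + rE_{i,j}` (`i ≠ j`, `r ∈ R`). -/
def Esub (R : Type*) [CommRing R] (d : ℕ) : Subgroup (SpecialLinearGroup (Fin d) R) :=
  Subgroup.closure {M | ∃ (i j : Fin d) (c : R), i ≠ j ∧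
    (M : Matrix (Fin d) (Fin d) R) = Matrix.transvection i j c}

/-- `E_d(R,H)`: the normal subgroup of `E_d(R)` generated (as a normal subgroup of
`E_d(R)`) by the elementary matrices `I_d + hE_{i,j}` with `h ∈ H`. -/
def EHsub (R : Type*) [CommRing R] (d : ℕ) (H : Ideal R) :
    Subgroup (SpecialLinearGroup (Fin d) R) :=
  Subgroup.closure {M | ∃ g ∈ Esub R d, ∃ s : SpecialLinearGroup (Fin d) R,
    (∃ (i j : Fin d) (c : R), i ≠ j ∧ c ∈ H ∧
      (s : Matrix (Fin d) (Fin d) R) = Matrix.transvection i j c) ∧ M = g * s * g⁻¹}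

namespace EHaux

variable {R : Type*} [CommRing R] {d : ℕ}

/-- Elementary matrix as an element of `SL_d(R)`. -/
def el (i j : Fin d) (hij : i ≠ j) (c : R) : SpecialLinearGroup (Fin d) R :=
  ⟨transvection i j c, det_transvection_of_ne i j hij c⟩

/-- Matrix unit with entry `1`, as a separate definition so rewriting does not loop. -/
def me (i j : Fin d) : Matrix (Fin d) (Fin d) R := Matrix.single i j 1

lemma el_coe (i j : Fin d) (hij : i ≠ j) (c : R) :
    (el i j hij c : Matrix (Fin d) (Fin d) R) = 1 + c • me i j := by
  show transvection i j c = _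
  rw [transvection, me, Matrix.smul_single, smul_eq_mul, mul_one]

lemma me_mul (i j k l : Fin d) :
    (me i j : Matrix (Fin d) (Fin d) R) * me k l = if j = k then me i l else 0 := by
  rcases eq_or_ne j k with rfl | h
  · simp [me]
  · simp [me, h]

lemma el_mul_same (i j : Fin d) (hij : i ≠ j) (a b : R) :
    el i j hij a * el i j hij b = el i j hij (a + b) := by
  apply Subtype.ext
  show transvection i j a * transvection i j b = transvection i j (a + b)
  exact transvection_mul_transvection_same i j hij a b

lemma el_zero (i j : Fin d) (hij : i ≠ j) : el i j hij (0 : R) = 1 := by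
  apply Subtype.ext
  show transvection i j (0 : R) = (1 : Matrix (Fin d) (Fin d) R)
  simp

lemma el_inv (i j : Fin d) (hij : i ≠ j) (a : R) :
    (el i j hij a)⁻¹ = el i j hij (-a) :=
  inv_eq_of_mul_eq_one_right (by rw [el_mul_same, add_neg_cancel, el_zero])

/-- The conjugated elementary `(I - fE_{ij})(I + hE_{ji})(I + fE_{ij})`. -/
def zel (i j : Fin d) (hij : i ≠ j) (f h : R) : SpecialLinearGroup (Fin d) R :=
  el i j hij (-f) * el j i hij.symm h * el i j hij f

/-- The generating set of conjugated elementaries. -/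
def zSet (H : Ideal R) : Set (SpecialLinearGroup (Fin d) R) :=
  {M | ∃ (i j : Fin d) (hij : i ≠ j) (f h : R), h ∈ H ∧ M = zel i j hij f h}

variable {H : Ideal R}

lemma mem_zel {i j : Fin d} (hij : i ≠ j) (f : R) {h : R} (hH : h ∈ H) :
    zel i j hij f h ∈ Subgroup.closure (zSet H) :=
  Subgroup.subset_closure ⟨i, j, hij, f, h, hH, rfl⟩

lemma mem_el {i j : Fin d} (hij : i ≠ j) {h : R} (hH : h ∈ H) :
    el i j hij h ∈ Subgroup.closure (zSet H) := by
  have : el i j hij h = zel j i hij.symm 0 h := by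
    simp [zel, neg_zero, el_zero]
  rw [this]
  exact mem_zel _ _ hH

/-! ### Conjugation identities, proved by expanding matrix products -/

section Identities

variable {i j k l m : Fin d}

set_option maxHeartbeats 1000000 in
/-- Case `(k,l) = (i,j)`. -/
lemma id_a (hij : i ≠ j) (q f h : R) :
    el i j hij q * zel i j hij f h * el i j hij (-q) = zel i j hij (f - q) h := by
  apply Subtype.ext
  simp only [Matrix.SpecialLinearGroup.coe_mul, zel, el_coe, mul_add, add_mul, one_mul, mul_one,
    smul_mul_assoc, mul_smul_comm, smul_smul, me_mul, hij, hij.symm, if_true, if_false,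
    smul_zero, add_zero, zero_add, reduceIte]
  module

set_option maxHeartbeats 1000000 in
/-- Case `k = i`, `l ∉ {i,j}`. -/
lemma id_4 (hij : i ≠ j) (hil : i ≠ l) (hjl : j ≠ l) (q f h : R) :
    el i l hil q * zel i j hij f h * el i l hil (-q)
      = zel i j hij f h * (el j l hjl (-(h * q)) * el i l hil (f * (h * q))) := by
  apply Subtype.ext
  simp only [Matrix.SpecialLinearGroup.coe_mul, zel, el_coe, mul_add, add_mul, one_mul, mul_one,
    smul_mul_assoc, mul_smul_comm, smul_smul, me_mul, hij, hij.symm, hil, hil.symm,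
    hjl, hjl.symm, if_true, if_false, smul_zero, add_zero, zero_add, reduceIte]
  module

set_option maxHeartbeats 1000000 in
/-- Case `l = j`, `k ∉ {i,j}`. -/
lemma id_7 (hij : i ≠ j) (hki : k ≠ i) (hkj : k ≠ j) (q f h : R) :
    el k j hkj q * zel i j hij f h * el k j hkj (-q)
      = zel i j hij f h * (el k i hki (q * h) * el k j hkj (q * h * f)) := by
  apply Subtype.ext
  simp only [Matrix.SpecialLinearGroup.coe_mul, zel, el_coe, mul_add, add_mul, one_mul, mul_one,
    smul_mul_assoc, mul_smul_comm, smul_smul, me_mul, hij, hij.symm, hki, hki.symm,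
    hkj, hkj.symm, if_true, if_false, smul_zero, add_zero, zero_add, reduceIte]
  module

set_option maxHeartbeats 1000000 in
/-- Case `k = j`, `l ∉ {i,j}`. -/
lemma id_d (hij : i ≠ j) (hil : i ≠ l) (hjl : j ≠ l) (q f h : R) :
    el j l hjl q * zel i j hij f h * el j l hjl (-q)
      = el i l hil (f * q) * zel i j hij f h * el i l hil (-(f * q)) := by
  apply Subtype.ext
  simp only [Matrix.SpecialLinearGroup.coe_mul, zel, el_coe, mul_add, add_mul, one_mul, mul_one,
    smul_mul_assoc, mul_smul_comm, smul_smul, me_mul, hij, hij.symm, hil, hil.symm,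
    hjl, hjl.symm, if_true, if_false, smul_zero, add_zero, zero_add, reduceIte]
  module

set_option maxHeartbeats 1000000 in
/-- Case `l = i`, `k ∉ {i,j}`. -/
lemma id_e (hij : i ≠ j) (hki : k ≠ i) (hkj : k ≠ j) (q f h : R) :
    el k i hki q * zel i j hij f h * el k i hki (-q)
      = el k j hkj (-(q * f)) * zel i j hij f h * el k j hkj (q * f) := by
  apply Subtype.ext
  simp only [Matrix.SpecialLinearGroup.coe_mul, zel, el_coe, mul_add, add_mul, one_mul, mul_one,
    smul_mul_assoc, mul_smul_comm, smul_smul, me_mul, hij, hij.symm, hki, hki.symm,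
    hkj, hkj.symm, if_true, if_false, smul_zero, add_zero, zero_add, reduceIte]
  module

set_option maxHeartbeats 1000000 in
/-- Case `{k,l} ∩ {i,j} = ∅`. -/
lemma id_g (hij : i ≠ j) (hkl : k ≠ l) (hki : k ≠ i) (hkj : k ≠ j) (hli : l ≠ i)
    (hlj : l ≠ j) (q f h : R) :
    el k l hkl q * zel i j hij f h * el k l hkl (-q) = zel i j hij f h := by
  apply Subtype.ext
  simp only [Matrix.SpecialLinearGroup.coe_mul, zel, el_coe, mul_add, add_mul, one_mul, mul_one,
    smul_mul_assoc, mul_smul_comm, smul_smul, me_mul, hij, hij.symm, hkl, hkl.symm,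
    hki, hki.symm, hkj, hkj.symm, hli, hli.symm, hlj, hlj.symm,
    if_true, if_false, smul_zero, add_zero, zero_add, reduceIte]
  module

set_option maxHeartbeats 4000000 in
/-- The `Q`-piece used in the hard case `(k,l) = (j,i)`. -/
lemma id_Q (hij : i ≠ j) (hmi : m ≠ i) (hmj : m ≠ j) (s f c : R) :
    el m i hmi s * el m j hmj f * el i m hmi.symm c * el m j hmj (-f) * el m i hmi (-s)
      = zel m i hmi (-s) c * (el i j hij (-(c * f)) * el m j hmj (s * -(c * f))) := by
  apply Subtype.ext
  simp only [Matrix.SpecialLinearGroup.coe_mul, zel, el_coe, mul_add, add_mul, one_mul, mul_one,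
    smul_mul_assoc, mul_smul_comm, smul_smul, me_mul, hij, hij.symm, hmi, hmi.symm,
    hmj, hmj.symm, if_true, if_false, smul_zero, add_zero, zero_add, reduceIte]
  module

set_option maxHeartbeats 4000000 in
/-- The main identity in the hard case `(k,l) = (j,i)`. -/
lemma id_b (hij : i ≠ j) (hmi : m ≠ i) (hmj : m ≠ j) (q f h : R) :
    el j i hij.symm q * zel i j hij f h * el j i hij.symm (-q)
      = (el j m hmj.symm (h * (1 - q * f)) * el i m hmi.symm (-(h * f)))
        * ((el m i hmi (1 - f * q)
              * (el m j hmj f * el j m hmj.symm (-(h * (1 - q * f))) * el m j hmj (-f))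
              * el m i hmi (-(1 - f * q)))
          * (el m i hmi (1 - f * q) * el m j hmj f * el i m hmi.symm (h * f)
              * el m j hmj (-f) * el m i hmi (-(1 - f * q)))) := by
  apply Subtype.ext
  simp only [Matrix.SpecialLinearGroup.coe_mul, zel, el_coe, mul_add, add_mul, one_mul, mul_one,
    smul_mul_assoc, mul_smul_comm, smul_smul, me_mul, hij, hij.symm, hmi, hmi.symm,
    hmj, hmj.symm, if_true, if_false, smul_zero, add_zero, zero_add, reduceIte]
  module

end Identities

/-! ### Membership lemmas -/

section Membership

variable {i j k l m : Fin d}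

lemma key4 (hij : i ≠ j) (hil : i ≠ l) (hjl : j ≠ l) (q f : R) {h : R} (hH : h ∈ H) :
    el i l hil q * zel i j hij f h * el i l hil (-q) ∈ Subgroup.closure (zSet H) := by
  rw [id_4 hij hil hjl]
  exact mul_mem (mem_zel _ _ hH)
    (mul_mem (mem_el _ (neg_mem (H.mul_mem_right q hH)))
      (mem_el _ (H.mul_mem_left f (H.mul_mem_right q hH))))

lemma key7 (hij : i ≠ j) (hki : k ≠ i) (hkj : k ≠ j) (q f : R) {h : R} (hH : h ∈ H) :
    el k j hkj q * zel i j hij f h * el k j hkj (-q) ∈ Subgroup.closure (zSet H) := by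
  rw [id_7 hij hki hkj]
  exact mul_mem (mem_zel _ _ hH)
    (mul_mem (mem_el _ (H.mul_mem_left q hH))
      (mem_el _ (H.mul_mem_right f (H.mul_mem_left q hH))))

lemma key_b (hij : i ≠ j) (hmi : m ≠ i) (hmj : m ≠ j) (q f : R) {h : R} (hH : h ∈ H) :
    el j i hij.symm q * zel i j hij f h * el j i hij.symm (-q)
      ∈ Subgroup.closure (zSet H) := by
  rw [id_b hij hmi hmj]
  refine mul_mem (mul_mem (mem_el _ (H.mul_mem_right _ hH))
    (mem_el _ (neg_mem (H.mul_mem_right f hH)))) (mul_mem ?_ ?_)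
  · -- the P-piece
    have hinner : el m j hmj f * el j m hmj.symm (-(h * (1 - q * f))) * el m j hmj (-f)
        = zel m j hmj (-f) (-(h * (1 - q * f))) := by
      simp [zel, neg_neg]
    rw [hinner]
    exact key4 hmj hmi hij.symm (1 - f * q) (-f) (neg_mem (H.mul_mem_right _ hH))
  · -- the Q-piece
    rw [id_Q hij hmi hmj]
    exact mul_mem (mem_zel _ _ (H.mul_mem_right f hH))
      (mul_mem (mem_el _ (neg_mem (H.mul_mem_right f (H.mul_mem_right f hH))))
        (mem_el _ (H.mul_mem_left _ (neg_mem (H.mul_mem_right f (H.mul_mem_right f hH))))))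

lemma exists_third (hd : 3 ≤ d) (i j : Fin d) : ∃ m : Fin d, m ≠ i ∧ m ≠ j := by
  by_contra hc
  push_neg at hc
  have hsub : (Finset.univ : Finset (Fin d)) ⊆ {i, j} := by
    intro m _
    simp only [Finset.mem_insert, Finset.mem_singleton]
    rcases eq_or_ne m i with hh | hh
    · exact Or.inl hh
    · exact Or.inr (hc m hh)
  have h1 := Finset.card_le_card hsub
  have h2 : ({i, j} : Finset (Fin d)).card ≤ 2 :=
    (Finset.card_insert_le _ _).trans (by simp)
  rw [Finset.card_univ, Fintype.card_fin] at h1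
  omega

lemma key_main (hd : 3 ≤ d) (hij : i ≠ j) (hkl : k ≠ l) (r f : R) {h : R} (hH : h ∈ H) :
    el k l hkl r * zel i j hij f h * el k l hkl (-r) ∈ Subgroup.closure (zSet H) := by
  by_cases hki : k = i
  · subst hki
    by_cases hlj : l = j
    · subst hlj
      rw [id_a]
      exact mem_zel _ _ hH
    · exact key4 hij hkl (fun e => hlj e.symm) r f hH
  · by_cases hkj : k = j
    · subst hkj
      by_cases hli : l = i
      · subst hli
        obtain ⟨m, hmi, hmj⟩ := exists_third hd l k
        exact key_b hij hmi hmj r f hH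
      · have hil : i ≠ l := fun e => hli e.symm
        rw [id_d hij hil hkl]
        exact key4 hij hil hkl (f * r) f hH
    · by_cases hlj : l = j
      · subst hlj
        exact key7 hij hki hkj r f hH
      · by_cases hli : l = i
        · subst hli
          rw [id_e hij hki hkj]
          have := key7 hij hki hkj (-(r * f)) f hH
          rwa [neg_neg] at this
        · rw [id_g hij hkl hki hkj hli hlj]
          exact mem_zel _ _ hH

lemma el_mem_normalizer (hd : 3 ≤ d) (hij : i ≠ j) (c : R) :
    el i j hij c ∈ Subgroup.normalizer (Subgroup.closure (zSet (d := d) H) : Set (SpecialLinearGroup (Fin d) R)) := by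
  have claim : ∀ (c : R) (x : SpecialLinearGroup (Fin d) R), x ∈ Subgroup.closure (zSet H) →
      el i j hij c * x * (el i j hij c)⁻¹ ∈ Subgroup.closure (zSet H) := by
    intro c x hx
    refine Subgroup.closure_induction
      (p := fun y _ => el i j hij c * y * (el i j hij c)⁻¹ ∈ Subgroup.closure (zSet H))
      ?_ ?_ ?_ ?_ hx
    · rintro y ⟨i', j', hij', f, h, hH, rfl⟩
      rw [el_inv]
      exact key_main hd hij' hij c f hH
    · simpa using one_mem _
    · intro y z _ _ py pz
      have hyz : el i j hij c * (y * z) * (el i j hij c)⁻¹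
          = (el i j hij c * y * (el i j hij c)⁻¹) * (el i j hij c * z * (el i j hij c)⁻¹) := by
        group
      rw [hyz]
      exact mul_mem py pz
    · intro y _ py
      have hyi : el i j hij c * y⁻¹ * (el i j hij c)⁻¹
          = (el i j hij c * y * (el i j hij c)⁻¹)⁻¹ := by group
      rw [hyi]
      exact inv_mem py
  rw [Subgroup.mem_normalizer_iff]
  intro x
  constructor
  · exact claim c x
  · intro hx
    have hx' := claim (-c) _ hx
    have hcancel : el i j hij (-c) * (el i j hij c * x * (el i j hij c)⁻¹)
        * (el i j hij (-c))⁻¹ = x := by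
      rw [show el i j hij (-c) = (el i j hij c)⁻¹ from (el_inv i j hij c).symm]
      group
    rwa [hcancel] at hx'

lemma esub_le_normalizer (hd : 3 ≤ d) :
    Esub R d ≤ Subgroup.normalizer (Subgroup.closure (zSet (d := d) H) : Set (SpecialLinearGroup (Fin d) R)) := by
  refine (Subgroup.closure_le _).mpr ?_
  rintro M ⟨i, j, c, hij, hM⟩
  have : M = el i j hij c := Subtype.ext hM
  rw [this]
  exact el_mem_normalizer hd hij c

lemma zel_coe (hij : i ≠ j) (f h : R) :
    (zel i j hij f h : Matrix (Fin d) (Fin d) R)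
      = (1 - Matrix.single i j f) * (1 + Matrix.single j i h) * (1 + Matrix.single i j f) := by
  have h1 : (1 : Matrix (Fin d) (Fin d) R) - Matrix.single i j f
      = 1 + (-f) • me i j := by
    rw [sub_eq_add_neg, me, Matrix.smul_single, smul_eq_mul, mul_one]
    congr 1
    rw [← neg_one_smul R (Matrix.single i j f), Matrix.smul_single, smul_eq_mul, neg_one_mul]
  have h2 : (1 : Matrix (Fin d) (Fin d) R) + Matrix.single j i h = 1 + h • me j i := by
    rw [me, Matrix.smul_single, smul_eq_mul, mul_one]
  have h3 : (1 : Matrix (Fin d) (Fin d) R) + Matrix.single i j f = 1 + f • me i j := by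
    rw [me, Matrix.smul_single, smul_eq_mul, mul_one]
  rw [h1, h2, h3]
  simp only [zel, Matrix.SpecialLinearGroup.coe_mul, el_coe]

end Membership

end EHaux

open EHaux in
/-- For `d ≥ 3`, `E_d(R,H)` is generated by the matrices
`(I_d − fE_{i,j})(I_d + hE_{j,i})(I_d + fE_{i,j})` with `h ∈ H`, `f ∈ R`, `i ≠ j`. -/
theorem EH_generated_by_conjugated_elementaries
    (R : Type*) [CommRing R] (H : Ideal R) (d : ℕ) (hd : 3 ≤ d) :
    EHsub R d H = Subgroup.closure {M : SpecialLinearGroup (Fin d) R |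
      ∃ (i j : Fin d) (f h : R), i ≠ j ∧ h ∈ H ∧
        (M : Matrix (Fin d) (Fin d) R) =
          (1 - Matrix.single i j f) * (1 + Matrix.single j i h) *
            (1 + Matrix.single i j f)} := by
  have hset : {M : SpecialLinearGroup (Fin d) R |
      ∃ (i j : Fin d) (f h : R), i ≠ j ∧ h ∈ H ∧
        (M : Matrix (Fin d) (Fin d) R) =
          (1 - Matrix.single i j f) * (1 + Matrix.single j i h) *
            (1 + Matrix.single i j f)} = zSet H := by
    ext M
    constructor
    · rintro ⟨i, j, f, h, hij, hH, hM⟩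
      exact ⟨i, j, hij, f, h, hH, Subtype.ext (hM.trans (zel_coe hij f h).symm)⟩
    · rintro ⟨i, j, hij, f, h, hH, rfl⟩
      exact ⟨i, j, f, h, hij, hH, zel_coe hij f h⟩
  rw [hset]
  apply le_antisymm
  · refine (Subgroup.closure_le _).mpr ?_
    rintro M ⟨g, hg, s, ⟨i, j, c, hij, hc, hs⟩, rfl⟩
    have hsG : s ∈ Subgroup.closure (zSet H) := by
      have : s = el i j hij c := Subtype.ext hs
      rw [this]
      exact mem_el hij hc
    exact (Subgroup.mem_normalizer_iff.mp (esub_le_normalizer hd hg) s).mp hsG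
  · refine (Subgroup.closure_le _).mpr ?_
    rintro M ⟨i, j, hij, f, h, hH, rfl⟩
    apply Subgroup.subset_closure
    refine ⟨el i j hij (-f), Subgroup.subset_closure ⟨i, j, -f, hij, rfl⟩,
      el j i hij.symm h, ⟨j, i, h, hij.symm, hH, rfl⟩, ?_⟩
    rw [el_inv, neg_neg]
    rfl
end

section
/- Let R be a commutative ring, d ≥ 3, and let f₁, f₂ ∈ R, h ∈ R, and i ≠ j, with a third index k distinct from i, j. Then the matrix I_d + h(f₁e_i + f₂e_j)^T(f₂e_i − f₁e_j) (a matrix which is identity except for a 2×2 block ((1+hf₁f₂, −hf₁²),(hf₂², 1−hf₁f₂)) in rows/columns i, j) can be written as a product of matrices of the form (I_d − fE_{p,q})(I_d + h'E_{q,p})(I_d + fE_{p,q}) with h' ∈ hR, f ∈ R, p ≠ q. -/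
/-!
Write `v = f₁e_i + f₂e_j` and `w = f₂e_i - f₁e_j`, so the matrix is `1 + h v wᵀ`. Since
`wᵀv = 0` and `v_k = w_k = 0`, it is the commutator of `1 + v e_kᵀ = E_{ik}(f₁) E_{jk}(f₂)`
and `1 + h e_k wᵀ = E_{ki}(hf₂) E_{kj}(-hf₁)`. By the Steinberg commutator relations, conjugating
`E_{ki}(a)` by `E_{ik}(f₁) E_{jk}(f₂)` gives `E_{ik}(f₁) E_{ki}(a) E_{ik}(-f₁)` times elementary
matrices with entries in `aR`, and symmetrically for `E_{kj}(b)`.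
-/

open Matrix

theorem one_add_mul_one_add_mul_one_sub_mul_one_sub {A : Type*} [Ring A] {X Y : A}
    (hX : X * X = 0) (hY : Y * Y = 0) (hYX : Y * X = 0) :
    (1 + X) * (1 + Y) * (1 - X) * (1 - Y) = 1 + X * Y := by
  have h₁ : (1 + X) * (1 + Y) * (1 - X) = 1 + Y + X * Y := by
    simp only [mul_add, add_mul, mul_sub, mul_one, one_mul, mul_assoc, hX, hYX, mul_zero]
    abel
  rw [h₁]
  simp only [mul_sub, mul_one, add_mul, one_mul, mul_assoc, hY, mul_zero]
  abel

namespace Matrix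

variable {n R : Type*} [Fintype n] [DecidableEq n] [CommRing R]

theorem transvection_mul_transvection_of_ne {a b c d : n} (hbc : b ≠ c) (x y : R) :
    transvection a b x * transvection c d y = 1 + single a b x + single c d y := by
  simp only [transvection, add_mul, mul_add, one_mul, mul_one, single_mul_single_of_ne _ _ _ _ hbc]
  abel

theorem transvection_mul_transvection_comm {a b c d : n} (hbc : b ≠ c) (hda : d ≠ a) (x y : R) :
    transvection a b x * transvection c d y = transvection c d y * transvection a b x := by
  rw [transvection_mul_transvection_of_ne hbc, transvection_mul_transvection_of_ne hda,
    add_right_comm]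

theorem transvection_neg_mul_transvection_mul {a b : n} (hab : a ≠ b) (x : R) (M : Matrix n n R) :
    transvection a b (-x) * (transvection a b x * M) = M := by
  rw [← mul_assoc, transvection_mul_transvection_same _ _ hab, neg_add_cancel, transvection_zero,
    one_mul]

theorem transvection_conj_transvection_of_col_eq_row {a b c : n} (hab : a ≠ b) (hac : a ≠ c)
    (x y : R) :
    transvection a b x * transvection b c y * transvection a b (-x) =
      transvection b c y * transvection a c (x * y) := by
  rw [transvection_mul_transvection_of_ne hac.symm]
  simp only [transvection, ← single_neg, add_mul, mul_add, mul_neg, one_mul, mul_one,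
    single_mul_single_same, single_mul_single_of_ne _ _ _ _ hab.symm,
    single_mul_single_of_ne _ _ _ _ hac.symm, add_zero]
  abel

theorem transvection_conj_transvection_of_row_eq_col {a b c : n} (hab : a ≠ b) (hbc : b ≠ c)
    (hca : c ≠ a) (x y : R) :
    transvection a b x * transvection c a y * transvection a b (-x) =
      transvection c a y * transvection c b (-(y * x)) := by
  rw [transvection_mul_transvection_of_ne hca.symm]
  simp only [transvection, ← single_neg, add_mul, mul_add, mul_neg, one_mul, mul_one,
    single_mul_single_same, single_mul_single_of_ne _ _ _ _ hab.symm,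
    single_mul_single_of_ne _ _ _ _ hbc, add_zero]
  abel

def conjTransvections (I : Ideal R) : Set (Matrix n n R) :=
  {X | ∃ (p q : n) (f a : R), p ≠ q ∧ a ∈ I ∧
    X = (1 - single p q f) * (1 + single q p a) * (1 + single p q f)}

variable {I : Ideal R}

theorem transvection_mem_closure_conjTransvections {p q : n} (hpq : p ≠ q) {a : R}
    (ha : a ∈ I) :
    transvection p q a ∈ Submonoid.closure (conjTransvections I) :=
  Submonoid.subset_closure ⟨q, p, 0, a, hpq.symm, ha, by simp [transvection]⟩

theorem transvection_conj_mem_closure_conjTransvections {p q : n} (hpq : p ≠ q) (f : R) {a : R}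
    (ha : a ∈ I) :
    transvection q p f * transvection p q a * transvection q p (-f) ∈
      Submonoid.closure (conjTransvections I) :=
  Submonoid.subset_closure
    ⟨q, p, -f, a, hpq.symm, ha, by simp [transvection, sub_eq_add_neg, single_neg]⟩

theorem conj_transvection_mem_closure_conjTransvections {i j k : n} (hij : i ≠ j) (hik : i ≠ k)
    (hjk : j ≠ k) (f₁ f₂ : R) {a : R} (ha : a ∈ I) :
    transvection i k f₁ * transvection j k f₂ * transvection k i a *
        (transvection j k (-f₂) * transvection i k (-f₁)) ∈
      Submonoid.closure (conjTransvections I) := by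
  have hconj : transvection i k f₁ * transvection j k f₂ * transvection k i a *
        (transvection j k (-f₂) * transvection i k (-f₁)) =
      (transvection i k f₁ * transvection k i a * transvection i k (-f₁)) *
        (transvection j i (f₂ * a) * transvection j k (-(f₂ * a * f₁))) := by
    calc _ = transvection i k f₁ *
          (transvection j k f₂ * transvection k i a * transvection j k (-f₂)) *
          transvection i k (-f₁) := by simp only [mul_assoc]
      _ = transvection i k f₁ * (transvection k i a * transvection j i (f₂ * a)) *
          transvection i k (-f₁) := by
        rw [transvection_conj_transvection_of_col_eq_row hjk hij.symm]
      _ = (transvection i k f₁ * transvection k i a * transvection i k (-f₁)) *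
          (transvection i k f₁ * transvection j i (f₂ * a) * transvection i k (-f₁)) := by
        simp only [mul_assoc, transvection_neg_mul_transvection_mul hik]
      _ = _ := by rw [transvection_conj_transvection_of_row_eq_col hik hjk.symm hij.symm]
  rw [hconj]
  exact mul_mem (transvection_conj_mem_closure_conjTransvections hik.symm f₁ ha)
    (mul_mem (transvection_mem_closure_conjTransvections hij.symm (I.mul_mem_left f₂ ha))
      (transvection_mem_closure_conjTransvections hjk
        (I.neg_mem (I.mul_mem_right f₁ (I.mul_mem_left f₂ ha)))))

theorem commutator_mem_closure_conjTransvections {i j k : n} (hij : i ≠ j) (hik : i ≠ k)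
    (hjk : j ≠ k) (f₁ f₂ : R) {a b : R} (ha : a ∈ I) (hb : b ∈ I) :
    transvection i k f₁ * transvection j k f₂ * (transvection k i a * transvection k j b) *
        (transvection j k (-f₂) * transvection i k (-f₁)) *
        (transvection k j (-b) * transvection k i (-a)) ∈
      Submonoid.closure (conjTransvections I) := by
  have hsplit : transvection i k f₁ * transvection j k f₂ *
        (transvection k i a * transvection k j b) *
        (transvection j k (-f₂) * transvection i k (-f₁)) =
      (transvection i k f₁ * transvection j k f₂ * transvection k i a *
          (transvection j k (-f₂) * transvection i k (-f₁))) *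
        (transvection j k f₂ * transvection i k f₁ * transvection k j b *
          (transvection i k (-f₁) * transvection j k (-f₂))) := by
    rw [transvection_mul_transvection_comm hik.symm hjk.symm f₂ f₁,
      transvection_mul_transvection_comm hjk.symm hik.symm (-f₁) (-f₂)]
    simp only [mul_assoc, transvection_neg_mul_transvection_mul hik,
      transvection_neg_mul_transvection_mul hjk]
  rw [hsplit]
  exact mul_mem (mul_mem (conj_transvection_mem_closure_conjTransvections hij hik hjk f₁ f₂ ha)
      (conj_transvection_mem_closure_conjTransvections hij.symm hjk hik f₂ f₁ hb))
    (mul_mem (transvection_mem_closure_conjTransvections hjk.symm (I.neg_mem hb))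
      (transvection_mem_closure_conjTransvections hik.symm (I.neg_mem ha)))

theorem one_add_rankOne_eq_transvection_commutator {i j k : n} (hij : i ≠ j) (hik : i ≠ k)
    (hjk : j ≠ k) (f₁ f₂ h : R) :
    1 + of (fun p q => h * ((if p = i then f₁ else 0) + (if p = j then f₂ else 0)) *
        ((if q = i then f₂ else 0) - (if q = j then f₁ else 0))) =
      transvection i k f₁ * transvection j k f₂ *
        (transvection k i (h * f₂) * transvection k j (-(h * f₁))) *
        (transvection j k (-f₂) * transvection i k (-f₁)) *
        (transvection k j (h * f₁) * transvection k i (-(h * f₂))) := by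
  set X : Matrix n n R := single i k f₁ + single j k f₂ with hXdef
  set Y : Matrix n n R := single k i (h * f₂) + single k j (-(h * f₁)) with hYdef
  have hX : transvection i k f₁ * transvection j k f₂ = 1 + X := by
    rw [transvection_mul_transvection_of_ne hjk.symm, add_assoc]
  have hX' : transvection j k (-f₂) * transvection i k (-f₁) = 1 - X := by
    rw [transvection_mul_transvection_of_ne hik.symm, hXdef]
    simp only [← single_neg]
    abel
  have hY : transvection k i (h * f₂) * transvection k j (-(h * f₁)) = 1 + Y := by
    rw [transvection_mul_transvection_of_ne hik, add_assoc]
  have hY' : transvection k j (h * f₁) * transvection k i (-(h * f₂)) = 1 - Y := by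
    rw [transvection_mul_transvection_of_ne hjk, hYdef]
    simp only [← single_neg]
    abel
  have hXX : X * X = 0 := by
    simp only [X, add_mul, mul_add, single_mul_single_of_ne _ _ _ _ hik.symm,
      single_mul_single_of_ne _ _ _ _ hjk.symm, add_zero]
  have hYY : Y * Y = 0 := by
    simp only [Y, add_mul, mul_add, single_mul_single_of_ne _ _ _ _ hik,
      single_mul_single_of_ne _ _ _ _ hjk, add_zero]
  have hYX : Y * X = 0 := by
    simp only [X, Y, add_mul, mul_add, single_mul_single_same,
      single_mul_single_of_ne _ _ _ _ hij, single_mul_single_of_ne _ _ _ _ hij.symm, add_zero,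
      zero_add, ← single_add]
    rw [show h * f₂ * f₁ + -(h * f₁) * f₂ = 0 by ring, single_zero]
  have hXY : X * Y = of (fun p q =>
      h * ((if p = i then f₁ else 0) + (if p = j then f₂ else 0)) *
        ((if q = i then f₂ else 0) - (if q = j then f₁ else 0))) := by
    ext p q
    simp only [X, Y, add_mul, mul_add, single_mul_single_same, add_apply, single_apply, of_apply]
    by_cases hpi : p = i <;> by_cases hpj : p = j <;> by_cases hqi : q = i <;>
      by_cases hqj : q = j <;> subst_vars <;> simp_all [Ne.symm] <;> ring
  rw [hX, hY, hX', hY', one_add_mul_one_add_mul_one_sub_mul_one_sub hXX hYY hYX, hXY]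

end Matrix

theorem block_matrix_product_of_conjugated_elementaries_general
    (R : Type*) [CommRing R] (d : ℕ) (i j k : Fin d)
    (hij : i ≠ j) (hki : k ≠ i) (hkj : k ≠ j) (f₁ f₂ h : R) :
    ∃ L : List (Matrix (Fin d) (Fin d) R),
      (∀ X ∈ L, ∃ (p q : Fin d) (f h' : R), p ≠ q ∧ h' ∈ Ideal.span ({h} : Set R) ∧
        X = (1 - Matrix.single p q f) * (1 + Matrix.single q p h') *
          (1 + Matrix.single p q f)) ∧
      L.prod = 1 + Matrix.of (fun p q =>
        h * ((if p = i then f₁ else 0) + (if p = j then f₂ else 0)) *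
          ((if q = i then f₂ else 0) - (if q = j then f₁ else 0))) := by
  have hh : h ∈ Ideal.span ({h} : Set R) := Ideal.mem_span_singleton_self h
  have hmem := commutator_mem_closure_conjTransvections hij hki.symm hkj.symm f₁ f₂
    (Ideal.mul_mem_right f₂ _ hh) (neg_mem (Ideal.mul_mem_right f₁ _ hh))
  rw [neg_neg, ← one_add_rankOne_eq_transvection_commutator hij hki.symm hkj.symm] at hmem
  exact Submonoid.exists_list_of_mem_closure hmem

/-- For `d ≥ 3`, `i ≠ j` with a third index `k` distinct from both, the matrix
`I_d + h·(f₁e_i + f₂e_j)ᵀ(f₂e_i − f₁e_j)` (identity except for the 2×2 block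
`((1+hf₁f₂, −hf₁²),(hf₂², 1−hf₁f₂))` in rows/columns `i, j`) is a product of matrices of
the form `(I_d − fE_{p,q})(I_d + h'E_{q,p})(I_d + fE_{p,q})` with `h' ∈ hR`, `f ∈ R`,
`p ≠ q`. -/
theorem block_matrix_product_of_conjugated_elementaries
    (R : Type*) [CommRing R] (d : ℕ) (hd : 3 ≤ d) (i j k : Fin d)
    (hij : i ≠ j) (hki : k ≠ i) (hkj : k ≠ j) (f₁ f₂ h : R) :
    ∃ L : List (Matrix (Fin d) (Fin d) R),
      (∀ X ∈ L, ∃ (p q : Fin d) (f h' : R), p ≠ q ∧ h' ∈ Ideal.span ({h} : Set R) ∧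
        X = (1 - Matrix.single p q f) * (1 + Matrix.single q p h') *
          (1 + Matrix.single p q f)) ∧
      L.prod = 1 + Matrix.of (fun p q =>
        h * ((if p = i then f₁ else 0) + (if p = j then f₂ else 0)) *
          ((if q = i then f₂ else 0) - (if q = j then f₁ else 0))) :=
  block_matrix_product_of_conjugated_elementaries_general R d i j k hij hki hkj f₁ f₂ h
end

section
/- Let R_n = ℤ[x₁^{±1},…,x_n^{±1}], H_m = Σ_{r=1}^n (x_r^m − 1)R_n + mR_n, and T_m = Σ_{r=1}^n σ_r²(x_r^m−1)R_n + Σ_{r=1}^n σ_r·mR_n + m²R_n, where σ_r = x_r − 1. Then H_{m²} ⊆ T_m for every m ∈ ℕ. -/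
/-- `H_m = Σ_r (x_r^m − 1)R_n + mR_n`. -/
noncomputable def Hideal (n m : ℕ) : Ideal (Rn n) :=
  Ideal.span ({(m : Rn n)} ∪ Set.range fun r : Fin n => Xv r ^ m - 1)

/-- `T_m = Σ_r σ_r²(x_r^m−1)R_n + Σ_r σ_r·mR_n + m²R_n`. -/
noncomputable def Tideal (n m : ℕ) : Ideal (Rn n) :=
  Ideal.span (({(m : Rn n) ^ 2} ∪ Set.range fun r : Fin n => sg r ^ 2 * (Xv r ^ m - 1)) ∪
    Set.range fun r : Fin n => sg r * (m : Rn n))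

/-- `H_{m²} ⊆ T_m` for every `m`. -/
theorem H_m_sq_le_T_m (n m : ℕ) : Hideal n (m ^ 2) ≤ Tideal n m := by
  rw [Hideal, Ideal.span_le]
  apply Set.union_subset
  · intro z hz
    simp only [Set.mem_singleton_iff] at hz
    subst hz
    have h : ((m ^ 2 : ℕ) : Rn n) = (m : Rn n) ^ 2 := by push_cast; ring
    rw [h]
    exact Ideal.subset_span (Or.inl (Or.inl rfl))
  · rintro z ⟨r, rfl⟩
    show Xv r ^ m ^ 2 - 1 ∈ (Tideal n m : Set (Rn n))
    set x := Xv r with hx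
    set σ := sg r with hσ
    have hxs : x - 1 = σ := rfl
    obtain ⟨p, hp⟩ : σ ∣ (∑ j ∈ Finset.range m, x ^ j) - (m : Rn n) := by
      rw [← hxs]
      have h1 : (∑ j ∈ Finset.range m, x ^ j) - (m : Rn n) =
          ∑ j ∈ Finset.range m, (x ^ j - 1) := by
        rw [Finset.sum_sub_distrib]
        simp
      rw [h1]
      exact Finset.dvd_sum fun j _ => by simpa using sub_dvd_pow_sub_pow x 1 j
    obtain ⟨u, hu⟩ : (x ^ m - 1) ∣ (∑ j ∈ Finset.range m, (x ^ m) ^ j) - (m : Rn n) := by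
      have h1 : (∑ j ∈ Finset.range m, (x ^ m) ^ j) - (m : Rn n) =
          ∑ j ∈ Finset.range m, ((x ^ m) ^ j - 1) := by
        rw [Finset.sum_sub_distrib]
        simp
      rw [h1]
      exact Finset.dvd_sum fun j _ => by simpa using sub_dvd_pow_sub_pow (x ^ m) 1 j
    have hA : x ^ m - 1 = σ * (∑ j ∈ Finset.range m, x ^ j) := by
      rw [← hxs, ← geom_sum_mul]; ring
    have hB : x ^ (m ^ 2) - 1 = (x ^ m - 1) * (∑ j ∈ Finset.range m, (x ^ m) ^ j) := by
      have h := geom_sum_mul (x ^ m) m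
      have h2 : (x ^ m) ^ m = x ^ (m ^ 2) := by rw [← pow_mul, pow_two]
      rw [h2] at h
      rw [← h]
      exact mul_comm _ _
    have hAeq : (∑ j ∈ Finset.range m, x ^ j) = σ * p + (m : Rn n) := by
      linear_combination hp
    have hBeq : (∑ j ∈ Finset.range m, (x ^ m) ^ j) = (x ^ m - 1) * u + (m : Rn n) := by
      linear_combination hu
    have key : x ^ (m ^ 2) - 1 =
        (σ ^ 2 * (x ^ m - 1)) * (p * u) +
        (σ * (m : Rn n)) * (σ * p + (x ^ m - 1) * u + (m : Rn n)) := by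
      rw [hB, hBeq, hA, hAeq]
      ring
    rw [key]
    exact Ideal.add_mem _
      (Ideal.mul_mem_right _ _ (Ideal.subset_span (Or.inl (Or.inr ⟨r, rfl⟩))))
      (Ideal.mul_mem_right _ _ (Ideal.subset_span (Or.inr ⟨r, rfl⟩)))
end

section
/- Let S = ℤ[x^{±1}], d ≥ 3, and m > 2. Then GL_d(S, J_m) = D_m · SL_d(S, J_m), where J_m = (x^m − 1)S + mS and D_m = {I_d + (x^{km} − 1)E_{1,1} : k ∈ ℤ}, and moreover D_m ∩ SL_d(S, J_m) = {I_d}. -/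
/-!
The units of `ℤ[x, x⁻¹]` are the monomials `±xⁿ`. Reducing coefficients and exponents modulo `m`
gives a ring map `ℤ[x, x⁻¹] = ℤ[ℤ] → (ℤ/m)[ℤ/m]` killing `J_m`, under which `±xⁿ ↦ ±[n]`.
So a unit congruent to `1` modulo `J_m` is `xⁿ` with `m ∣ n`; the sign is excluded since
`-1 ≢ 1 (mod m)` for `m > 2`. Applied to `det M` this gives `det M = x^{km}`, and then
`M = D_k (D_{-k} M)` with `D_{-k} M ∈ SL_d(S, J_m)`. Finally `det D_k = x^{km}`, so `D_k` has
determinant `1` only when it is the identity.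
-/

open LaurentPolynomial Matrix

namespace Matrix

variable {n R : Type*} [Fintype n] [DecidableEq n] [CommRing R]

theorem mapMatrix_mk_eq_one_iff {I : Ideal R} {M : Matrix n n R} :
    (Ideal.Quotient.mk I).mapMatrix M = 1 ↔ ∀ p q, M p q - (1 : Matrix n n R) p q ∈ I := by
  rw [← map_one (Ideal.Quotient.mk I).mapMatrix, ← Matrix.ext_iff]
  simp only [RingHom.mapMatrix_apply, Matrix.map_apply, Ideal.Quotient.mk_eq_mk_iff_sub_mem]

theorem det_sub_one_mem_of_mapMatrix_mk_eq_one {I : Ideal R} {M : Matrix n n R}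
    (h : (Ideal.Quotient.mk I).mapMatrix M = 1) : M.det - 1 ∈ I := by
  rw [← Ideal.Quotient.mk_eq_mk_iff_sub_mem, RingHom.map_det, h, det_one, map_one]

theorem mapMatrix_mk_one_add_single {I : Ideal R} (i j : n) {c : R} (hc : c ∈ I) :
    (Ideal.Quotient.mk I).mapMatrix (1 + single i j c) = 1 := by
  rw [map_add, map_one, RingHom.mapMatrix_apply, Matrix.map_single,
    Ideal.Quotient.eq_zero_iff_mem.mpr hc, single_zero, add_zero]

theorem one_add_single_sub_one_mul (i : n) (u v : R) :
    (1 + single i i (u - 1) : Matrix n n R) * (1 + single i i (v - 1)) =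
      1 + single i i (u * v - 1) := by
  rw [show u * v - 1 = (u - 1) + (v - 1) + (u - 1) * (v - 1) by ring, single_add, single_add,
    ← single_mul_single_same (u - 1) i i i (v - 1)]
  noncomm_ring

theorem det_one_add_single_sub_one (i : n) (u : R) :
    (1 + single i i (u - 1) : Matrix n n R).det = u := by
  rw [← diagonal_one, ← diagonal_single, diagonal_add, det_diagonal,
    Finset.prod_eq_single i (fun j _ hj => by simp [hj]) (by simp)]
  simp

end Matrix

namespace LaurentPolynomial

variable {R : Type*} [CommRing R]

theorem T_sub_one_dvd_T_mul_sub_one (m k : ℤ) : (T m - 1 : R[T;T⁻¹]) ∣ T (k * m) - 1 := by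
  have hnat (n : ℕ) : (T m - 1 : R[T;T⁻¹]) ∣ T (n * m) - 1 := by
    simpa [T_pow] using sub_dvd_pow_sub_pow (T m : R[T;T⁻¹]) 1 n
  obtain ⟨n, rfl | rfl⟩ := Int.eq_nat_or_neg k
  · exact hnat n
  · have h : (T (-n * m) - 1 : R[T;T⁻¹]) = -T (-n * m) * (T (n * m) - 1) := by
      rw [neg_mul, neg_mul, mul_sub, ← T_add]; simp
    exact h ▸ dvd_mul_of_dvd_right (hnat n) _

theorem exists_C_mul_T_of_isUnit [IsDomain R] {f : R[T;T⁻¹]} (hf : IsUnit f) :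
    ∃ r n, IsUnit r ∧ f = C r * T n := by
  obtain ⟨g, hg⟩ := hf.exists_right_inv
  obtain ⟨a, p, hp⟩ := f.exists_T_pow
  obtain ⟨b, q, hq⟩ := g.exists_T_pow
  have hpq : p * q = Polynomial.X ^ (a + b) := by
    apply Polynomial.toLaurent_injective
    rw [map_mul, hp, hq, Polynomial.toLaurent_X_pow, mul_mul_mul_comm, hg, one_mul, ← T_add]
    push_cast; rfl
  obtain ⟨i, -, hpi⟩ := (dvd_prime_pow Polynomial.prime_X _).mp ⟨q, hpq.symm⟩
  obtain ⟨u, hu⟩ := hpi.symm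
  obtain ⟨r, hr, hru⟩ := Polynomial.isUnit_iff.mp u.isUnit
  refine ⟨r, i - a, hr, ?_⟩
  have hf : f = Polynomial.toLaurent p * T (-a) := by rw [hp, mul_T_assoc]; simp
  rw [hf, ← hu, ← hru, map_mul, Polynomial.toLaurent_X_pow, Polynomial.toLaurent_C, T_sub]
  ring

noncomputable def congruenceIdeal (m : ℕ) : Ideal ℤ[T;T⁻¹] :=
  Ideal.span {T m - 1, (m : ℤ[T;T⁻¹])}

theorem T_mul_sub_one_mem_congruenceIdeal (m : ℕ) (k : ℤ) :
    T (k * m) - 1 ∈ congruenceIdeal m :=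
  Ideal.mem_of_dvd _ (T_sub_one_dvd_T_mul_sub_one m k) (Ideal.subset_span (by simp))

noncomputable def reduceMod (m : ℕ) : ℤ[T;T⁻¹] →+* AddMonoidAlgebra (ZMod m) (ZMod m) :=
  (AddMonoidAlgebra.mapRingHom (ZMod m) (Int.castRingHom (ZMod m))).comp
    (AddMonoidAlgebra.mapDomainRingHom ℤ (Int.castAddHom (ZMod m)))

theorem reduceMod_C_mul_T (m : ℕ) (r n : ℤ) :
    reduceMod m (C r * T n) = AddMonoidAlgebra.single (n : ZMod m) (r : ZMod m) := by
  rw [← single_eq_C_mul_T, reduceMod, RingHom.comp_apply, AddMonoidAlgebra.mapDomainRingHom_apply,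
    AddMonoidAlgebra.mapDomain_single, AddMonoidAlgebra.mapRingHom_single]
  rfl

theorem congruenceIdeal_le_ker_reduceMod (m : ℕ) :
    congruenceIdeal m ≤ RingHom.ker (reduceMod m) := by
  rw [congruenceIdeal, Ideal.span_le, Set.insert_subset_iff, Set.singleton_subset_iff]
  constructor
  · have hT := reduceMod_C_mul_T m 1 m
    rw [map_one, one_mul] at hT
    rw [SetLike.mem_coe, RingHom.mem_ker, map_sub, hT, Int.cast_natCast, ZMod.natCast_self,
      Int.cast_one, ← AddMonoidAlgebra.one_def, map_one, sub_self]
  · rw [SetLike.mem_coe, RingHom.mem_ker, map_natCast, AddMonoidAlgebra.natCast_def,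
      ZMod.natCast_self, AddMonoidAlgebra.single_zero]

theorem exists_eq_T_mul_of_isUnit_of_sub_one_mem {m : ℕ} (hm : 2 < m) {u : ℤ[T;T⁻¹]}
    (hu : IsUnit u) (h : u - 1 ∈ congruenceIdeal m) : ∃ k : ℤ, u = T (k * m) := by
  have : Fact (2 < m) := ⟨hm⟩
  have : Fact (1 < m) := ⟨by omega⟩
  obtain ⟨r, n, hr, rfl⟩ := exists_C_mul_T_of_isUnit hu
  have hred := congruenceIdeal_le_ker_reduceMod m h
  rw [RingHom.mem_ker, map_sub, map_one, sub_eq_zero, reduceMod_C_mul_T,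
    AddMonoidAlgebra.one_def, AddMonoidAlgebra.single_inj] at hred
  obtain ⟨hn, hr1⟩ := hred.resolve_right fun h => one_ne_zero h.2
  obtain ⟨k, rfl⟩ := (ZMod.intCast_zmod_eq_zero_iff_dvd n m).mp hn
  obtain rfl | rfl := Int.isUnit_iff.mp hr
  · exact ⟨k, by simp [mul_comm]⟩
  · exact absurd (by simpa using hr1) ZMod.neg_one_ne_one

end LaurentPolynomial

/-- For `S = ℤ[x^{±1}]`, `d ≥ 3` and `m > 2`:
`GL_d(S, J_m) = D_m · SL_d(S, J_m)` where `J_m = (x^m−1)S + mS` and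
`D_m = {I_d + (x^{km} − 1)E_{1,1} : k ∈ ℤ}`; moreover `D_m ∩ SL_d(S, J_m) = {I_d}`. -/
theorem GL_rel_eq_D_mul_SL_rel (d m : ℕ) (hd : 3 ≤ d) (hm : 2 < m) :
    (∀ M : Matrix (Fin d) (Fin d) (LaurentPolynomial ℤ), IsUnit M →
      (∀ p q, M p q - (1 : Matrix (Fin d) (Fin d) (LaurentPolynomial ℤ)) p q ∈
        Ideal.span ({T (m : ℤ) - 1, (m : LaurentPolynomial ℤ)} : Set (LaurentPolynomial ℤ))) →
      ∃ (k : ℤ) (B : Matrix (Fin d) (Fin d) (LaurentPolynomial ℤ)),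
        B.det = 1 ∧
        (∀ p q, B p q - (1 : Matrix (Fin d) (Fin d) (LaurentPolynomial ℤ)) p q ∈
          Ideal.span ({T (m : ℤ) - 1, (m : LaurentPolynomial ℤ)} : Set (LaurentPolynomial ℤ))) ∧
        M = (1 + Matrix.single (⟨0, by omega⟩ : Fin d) (⟨0, by omega⟩ : Fin d)
          (T (k * m) - 1)) * B) ∧
    (∀ k : ℤ,
      (1 + Matrix.single (⟨0, by omega⟩ : Fin d) (⟨0, by omega⟩ : Fin d)
          (T (k * m) - 1) : Matrix (Fin d) (Fin d) (LaurentPolynomial ℤ)).det = 1 →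
      (1 + Matrix.single (⟨0, by omega⟩ : Fin d) (⟨0, by omega⟩ : Fin d)
          (T (k * m) - 1) : Matrix (Fin d) (Fin d) (LaurentPolynomial ℤ)) = 1) := by
  simp only [← congruenceIdeal.eq_1]
  refine ⟨fun M hM hMJ => ?_, fun k hk => ?_⟩
  · rw [← mapMatrix_mk_eq_one_iff] at hMJ
    obtain ⟨k, hk⟩ := exists_eq_T_mul_of_isUnit_of_sub_one_mem hm (M.isUnit_iff_isUnit_det.mp hM)
      (det_sub_one_mem_of_mapMatrix_mk_eq_one hMJ)
    have hD := mapMatrix_mk_one_add_single (I := congruenceIdeal m) (⟨0, by omega⟩ : Fin d)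
      ⟨0, by omega⟩ (T_mul_sub_one_mem_congruenceIdeal m (-k))
    refine ⟨k, (1 + single ⟨0, by omega⟩ ⟨0, by omega⟩ (T (-k * m) - 1)) * M, ?_, ?_, ?_⟩
    · rw [det_mul, det_one_add_single_sub_one, hk, ← T_add]
      simp
    · rw [← mapMatrix_mk_eq_one_iff, map_mul, hD, hMJ, mul_one]
    · rw [← mul_assoc, one_add_single_sub_one_mul, ← T_add]
      simp
  · rw [det_one_add_single_sub_one] at hk
    rw [hk, sub_self, single_zero, add_zero]
end

section
/- Let G be a group, H ≤ G a subgroup, and ρ: G → H a surjective homomorphism restricting to the identity on H (a retraction). For m ∈ ℕ let G_m = ∩{N ◁ G : [G:N] divides m}. Then ρ(G_m) = H ∩ G_m. -/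
/-- If `H ≤ G` and `ρ : G → G` is a homomorphism with image inside `H` restricting to the
identity on `H` (a retraction of `G` onto `H`), then for
`G_m = ∩{N ◁ G : [G:N] ∣ m}` one has `ρ(G_m) = H ∩ G_m`. -/
theorem retraction_image_of_level (G : Type*) [Group G] (H : Subgroup G) (ρ : G →* G)
    (hmem : ∀ g : G, ρ g ∈ H) (hret : ∀ h ∈ H, ρ h = h) (m : ℕ) :
    Subgroup.map ρ (⨅ N ∈ {N : Subgroup G | N.Normal ∧ N.index ∣ m}, N) =
      H ⊓ (⨅ N ∈ {N : Subgroup G | N.Normal ∧ N.index ∣ m}, N) := by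
  apply le_antisymm
  · rw [Subgroup.map_le_iff_le_comap]
    intro x hx
    simp only [Subgroup.mem_iInf, Set.mem_setOf_eq] at hx
    simp only [Subgroup.mem_comap, Subgroup.mem_inf, Subgroup.mem_iInf, Set.mem_setOf_eq]
    refine ⟨hmem x, fun N hN => ?_⟩
    have hnorm : N.Normal := hN.1
    have hdvd : (N.comap ρ).index ∣ m := by
      rw [Subgroup.index_comap]
      exact (Subgroup.relIndex_dvd_index_of_normal N ρ.range).trans hN.2
    exact hx _ ⟨hnorm.comap ρ, hdvd⟩
  · rintro x ⟨hxH, hxK⟩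
    exact ⟨x, hxK, hret x hxH⟩
end

section
/- Let G be a group, ρ: G → Im(ρ) a retraction, A ◁ G with ρ(A) = Im(ρ) ∩ A, and D, C ≤ G with ρ(D) ⊆ Im(ρ) ∩ C. Then (A·Im(ρ)) ∩ (A·D) ⊆ A·(Im(ρ) ∩ C). -/
open scoped Pointwise

/-- Let `ρ : G → G` be an idempotent endomorphism (a retraction of `G` onto its image),
`A ◁ G` a normal subgroup with `ρ(A) = Im(ρ) ∩ A`, and `D, C ≤ G` subgroups with
`ρ(D) ⊆ Im(ρ) ∩ C`. Then `(A·Im(ρ)) ∩ (A·D) ⊆ A·(Im(ρ) ∩ C)` (as sets). -/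
theorem product_intersection_subset (G : Type*) [Group G] (ρ : G →* G)
    (hidem : ∀ g : G, ρ (ρ g) = ρ g) (A : Subgroup G) (hA : A.Normal)
    (hρA : Subgroup.map ρ A = ρ.range ⊓ A) (D C : Subgroup G)
    (hρD : ∀ d ∈ D, ρ d ∈ ρ.range ⊓ C) :
    ((A : Set G) * (ρ.range : Set G)) ∩ ((A : Set G) * (D : Set G)) ⊆
      (A : Set G) * ((ρ.range ⊓ C : Subgroup G) : Set G) := by
  rintro g ⟨⟨a, ha, r, hr, rfl⟩, ⟨b, hb, s, hs, hbs⟩⟩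
  -- r is fixed by ρ
  obtain ⟨x, hx⟩ := hr
  have hrfix : ρ r = r := by rw [← hx, hidem]
  have hab : a⁻¹ * b ∈ A := A.mul_mem (A.inv_mem ha) hb
  have hr_eq : r = a⁻¹ * b * s := by
    have h : b * s = a * r := hbs
    rw [mul_assoc, h, ← mul_assoc, inv_mul_cancel, one_mul]
  have hρab : ρ (a⁻¹ * b) ∈ A := by
    have : ρ (a⁻¹ * b) ∈ Subgroup.map ρ A := ⟨_, hab, rfl⟩
    rw [hρA] at this
    exact this.2
  have hρs := hρD s hs
  refine ⟨a * ρ (a⁻¹ * b), A.mul_mem ha hρab, ρ s, hρs, ?_⟩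
  have : r = ρ (a⁻¹ * b) * ρ s := by
    rw [← map_mul, ← hr_eq, hrfix]
  show a * ρ (a⁻¹ * b) * ρ s = a * r
  rw [mul_assoc, ← this]
end

section
/- Let n ≥ 4 and R_n = ℤ[x₁^{±1},…,x_n^{±1}], σ_i = x_i − 1, and let i, j, k ≠ 1 be distinct indices. For any f ∈ R_n and m ∈ ℕ, the commutator [(I_n + f(σ_ie_{1,j} − σ_je_{1,i}))^{−1}, (I_n + x_kE_{1,1} − E_{1,1} − σ_1E_{1,k})^m] equals I_n + (x_k^m − 1)f(σ_iE_{1,j} − σ_jE_{1,i}). -/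
/-!
Write `E(v)` for the identity with `v` added to the first row. These matrices multiply by
`E(v) E(w) = E(v + w + v₁ w)`. The matrix `N` is `E(v)` with `v₁ = 0`, and `P = E(p)` with
`1 + p₁ = x_k`, so `Pᵐ = E(q)` with `1 + q₁ = x_kᵐ`. For `v₁ = 0` the product rule gives
`E(-v) E(q) E(v) = E(q₁ v) E(q)`, hence `[N⁻¹, Pᵐ] = E((x_kᵐ - 1) v)`.
-/

open Matrix

namespace Matrix

lemma single_eq_vecMulVec_single {ι κ R : Type*} [DecidableEq ι] [DecidableEq κ]
    [MulZeroOneClass R] (z : ι) (c : κ) (a : R) :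
    single z c a = vecMulVec (Pi.single z 1) (Pi.single c a) := by
  ext r s
  by_cases r = z <;> simp_all [single, vecMulVec, Pi.single_apply, eq_comm]

section OneAddRow

variable {ι R : Type*} [DecidableEq ι] [Ring R]

def oneAddRow (z : ι) (v : ι → R) : Matrix ι ι R :=
  1 + vecMulVec (Pi.single z 1) v

@[simp]
lemma oneAddRow_zero (z : ι) : oneAddRow z (0 : ι → R) = 1 := by
  simp [oneAddRow]

lemma one_add_single_sub_single (z c c' : ι) (a b : R) :
    1 + single z c a - single z c' b = oneAddRow z (Pi.single c a - Pi.single c' b) := by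
  rw [oneAddRow, vecMulVec_sub, single_eq_vecMulVec_single, single_eq_vecMulVec_single,
    add_sub_assoc]

variable [Fintype ι]

lemma oneAddRow_mul_oneAddRow (z : ι) (v w : ι → R) :
    oneAddRow z v * oneAddRow z w = oneAddRow z (v + w + v z • w) := by
  simp only [oneAddRow, add_mul, mul_add, one_mul, mul_one, vecMulVec_mul_vecMulVec,
    dotProduct_single_one, vecMulVec_add]
  abel

lemma oneAddRow_pow (z : ι) (p : ι → R) (m : ℕ) :
    oneAddRow z p ^ m = oneAddRow z ((∑ l ∈ Finset.range m, (1 + p z) ^ l) • p) := by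
  induction m with
  | zero => simp
  | succ m ih =>
    rw [pow_succ', ih, oneAddRow_mul_oneAddRow, geom_sum_succ]
    congr 1
    simp only [smul_smul, add_mul, one_mul, add_smul, one_smul]
    abel

lemma oneAddRow_neg_mul_mul_oneAddRow {z : ι} {v : ι → R} (hv : v z = 0) (p : ι → R) :
    oneAddRow z (-v) * oneAddRow z p * oneAddRow z v =
      oneAddRow z (p z • v) * oneAddRow z p := by
  simp only [oneAddRow_mul_oneAddRow, Pi.add_apply, Pi.neg_apply, Pi.smul_apply, hv,
    smul_eq_mul, mul_zero, neg_zero, zero_smul, add_zero, zero_add]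
  congr 1
  abel

end OneAddRow

end Matrix

/-- For `n ≥ 4` and distinct indices `i, j, k` different from the first index: the
commutator `[(I_n + f(σ_ie_{1,j} − σ_je_{1,i}))⁻¹, (I_n + x_kE_{1,1} − E_{1,1} − σ_1E_{1,k})^m]`
equals `I_n + (x_k^m − 1)f(σ_iE_{1,j} − σ_jE_{1,i})`. -/
theorem commutator_with_power (n : ℕ) (hn : 4 ≤ n) (i j k : Fin n) (f : Rn n) (m : ℕ)
    (hi : i ≠ (⟨0, by omega⟩ : Fin n)) (hj : j ≠ (⟨0, by omega⟩ : Fin n))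
    (hk : k ≠ (⟨0, by omega⟩ : Fin n))
    (NU PU : (Matrix (Fin n) (Fin n) (Rn n))ˣ)
    (hN : (NU : Matrix (Fin n) (Fin n) (Rn n)) =
      1 + Matrix.single (⟨0, by omega⟩ : Fin n) j (f * sg i)
        - Matrix.single (⟨0, by omega⟩ : Fin n) i (f * sg j))
    (hP : (PU : Matrix (Fin n) (Fin n) (Rn n)) =
      1 + Matrix.single (⟨0, by omega⟩ : Fin n) (⟨0, by omega⟩ : Fin n) (Xv k - 1)
        - Matrix.single (⟨0, by omega⟩ : Fin n) k (sg (⟨0, by omega⟩ : Fin n))) :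
    ((NU⁻¹ * PU ^ m * NU * (PU ^ m)⁻¹ : (Matrix (Fin n) (Fin n) (Rn n))ˣ)
        : Matrix (Fin n) (Fin n) (Rn n)) =
      1 + Matrix.single (⟨0, by omega⟩ : Fin n) j ((Xv k ^ m - 1) * f * sg i)
        - Matrix.single (⟨0, by omega⟩ : Fin n) i ((Xv k ^ m - 1) * f * sg j) := by
  set z : Fin n := ⟨0, by omega⟩
  rw [one_add_single_sub_single] at hN hP ⊢
  set v : Fin n → Rn n := Pi.single j (f * sg i) - Pi.single i (f * sg j)
  set p : Fin n → Rn n := Pi.single z (Xv k - 1) - Pi.single k (sg z)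
  set q : Fin n → Rn n := (∑ l ∈ Finset.range m, (1 + p z) ^ l) • p
  have hvz : v z = 0 := by simp [v, Pi.single_eq_of_ne' hi, Pi.single_eq_of_ne' hj]
  have hpz : 1 + p z = Xv k := by simp [p, Pi.single_eq_of_ne' hk]
  have hqz : q z = Xv k ^ m - 1 := by
    simp only [q, Pi.smul_apply, smul_eq_mul]
    rw [← hpz, ← geom_sum_mul, add_sub_cancel_left]
  have hNinv : ((NU⁻¹ : (Matrix (Fin n) (Fin n) (Rn n))ˣ) : Matrix (Fin n) (Fin n) (Rn n)) =
      oneAddRow z (-v) :=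
    Units.inv_eq_of_mul_eq_one_right <| by
      rw [hN, oneAddRow_mul_oneAddRow, hvz, zero_smul, add_zero, add_neg_cancel, oneAddRow_zero]
  have hPm : ((PU ^ m : (Matrix (Fin n) (Fin n) (Rn n))ˣ) : Matrix (Fin n) (Fin n) (Rn n)) =
      oneAddRow z q := by
    rw [Units.val_pow_eq_pow_val, hP, oneAddRow_pow]
  rw [Units.val_mul, Units.val_mul, Units.val_mul, hNinv, hPm, hN,
    oneAddRow_neg_mul_mul_oneAddRow hvz, ← hPm, Units.mul_inv_cancel_right, hqz]
  congr 1
  simp only [v, smul_sub, ← Pi.single_smul, smul_eq_mul, mul_assoc]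
end

section
/- Let R be a commutative ring and let u, σ₁, σ₂ ∈ R. Then ((1,0,0),(uσ₂,1,0),(−uσ₁σ₂,0,1)) · ((1,0,0),(0,1,0),(σ₂,−σ₁,1)) · ((1,0,0),(0,1,u),(0,0,1)) · ((1,0,0),(0,1,0),(−σ₂,σ₁,1)) = ((1,0,0),(0,1+σ₁u,u),(0,−σ₁²u,1−σ₁u)). -/
/-- The explicit 3×3 matrix identity (with `a = σ₂`, `b = σ₁`) expressing the Form-3 matrix
`((1,0,0),(0,1+σ₁u,u),(0,−σ₁²u,1−σ₁u))` as a product of a row-type matrix and a conjugate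
of an elementary matrix. -/
theorem form3_matrix_identity (R : Type*) [CommRing R] (σ₁ σ₂ u : R) :
    (!![1, 0, 0; u*σ₂, 1, 0; -(u*σ₁*σ₂), 0, 1] : Matrix (Fin 3) (Fin 3) R) *
      !![1, 0, 0; 0, 1, 0; σ₂, -σ₁, 1] *
      !![1, 0, 0; 0, 1, u; 0, 0, 1] *
      !![1, 0, 0; 0, 1, 0; -σ₂, σ₁, 1] =
    !![1, 0, 0; 0, 1 + σ₁*u, u; 0, -(σ₁^2*u), 1 - σ₁*u] := by
  ext i j
  fin_cases i <;> fin_cases j <;> simp [Matrix.mul_apply, Fin.sum_univ_three, Matrix.vecHead, Matrix.vecTail] <;> ring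
end
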